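/- arXiv:2310.10441 — 2 statements merged into one kernel-verified Lean document; each statement's English description precedes it below -/
import Mathlib

section
/- Let p_1,…,p_n ∈ [0, 1/16]. Then f_n(4p_1,…,4p_n) ≥ 2·f_n(p_1,…,p_n); that is, if X_1,…,X_n are independent symmetric {−1,0,1} random variables with P[X_i = 1] = 4p_i and Y_1,…,Y_n are independent symmetric {−1,0,1} random variables with P[Y_i = 1] = p_i, then E|Σ_{i=1}^n X_i| ≥ 2·E|Σ_{i=1}^n Y_i|. -/
open MeasureTheory ProbabilityTheory

open Finset
open scoped Real

set_option linter.unusedSectionVars false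

lemma sum_cos_ndvd (M : ℕ) (m : ℤ) (hm : ¬ (M:ℤ) ∣ m) :
    ∑ j ∈ Finset.range M, Real.cos ((m : ℝ) * (2 * π / M * j)) = 0 := by
  rcases Nat.eq_zero_or_pos M with hM | hM
  · simp [hM]
  set θ : ℝ := 2 * π * m / M with hθ
  set z : ℂ := Complex.exp (θ * Complex.I) with hz
  have hzj : ∀ j : ℕ, z ^ j = Complex.exp ((((j : ℝ) * θ : ℝ) : ℂ) * Complex.I) := by
    intro j
    rw [hz, ← Complex.exp_nat_mul]
    congr 1
    push_cast
    ring
  have hre : ∀ j : ℕ, Real.cos ((m : ℝ) * (2 * π / M * j)) = (z ^ j).re := by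
    intro j
    rw [hzj j, Complex.exp_ofReal_mul_I_re]
    congr 1
    rw [hθ]
    field_simp
  have hzM : z ^ M = 1 := by
    rw [hzj M]
    have hM0 : (M:ℝ) ≠ 0 := Nat.cast_ne_zero.mpr hM.ne'
    have h1 : ((M : ℝ) * θ : ℝ) = 2 * π * m := by
      rw [hθ]; field_simp
    rw [h1]
    have h2 : (((2 * π * (m:ℝ)) : ℝ) : ℂ) * Complex.I = (m : ℂ) * (2 * π * Complex.I) := by
      push_cast; ring
    rw [h2]
    exact Complex.exp_int_mul_two_pi_mul_I m
  have hz1 : z ≠ 1 := by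
    intro h
    rw [hz, Complex.exp_eq_one_iff] at h
    obtain ⟨k, hk⟩ := h
    have him : θ = (k:ℝ) * (2*π) := by
      have := congrArg Complex.im hk
      simpa using this
    have hM0 : (M:ℝ) ≠ 0 := Nat.cast_ne_zero.mpr hM.ne'
    have h2π : (2*π : ℝ) ≠ 0 := by positivity
    have him2 : 2*π*((m:ℝ)/M) = 2*π*(k:ℝ) := by
      rw [hθ] at him
      linear_combination him
    have h3 : (m:ℝ)/M = (k:ℝ) := mul_left_cancel₀ h2π him2
    have h4 : (m:ℝ) = (k:ℝ)*M := by
      field_simp at h3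
      linarith
    have h5 : m = k * M := by exact_mod_cast h4
    exact hm ⟨k, by linarith⟩
  have hsum : ∑ j ∈ Finset.range M, z ^ j = 0 := by
    rw [geom_sum_eq hz1, hzM]
    simp
  calc ∑ j ∈ Finset.range M, Real.cos ((m : ℝ) * (2 * π / M * j))
      = ∑ j ∈ Finset.range M, (z ^ j).re := by
        exact Finset.sum_congr rfl fun j _ => hre j
    _ = (∑ j ∈ Finset.range M, z ^ j).re := by
        rw [Complex.re_sum]
    _ = 0 := by rw [hsum]; rfl

lemma sum_cos_small (M : ℕ) (m : ℤ) (hmlt : m.natAbs < M) :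
    ∑ j ∈ Finset.range M, Real.cos ((m : ℝ) * (2 * π / M * j)) =
      if m = 0 then (M : ℝ) else 0 := by
  by_cases h0 : m = 0
  · simp [h0]
  · rw [if_neg h0]
    apply sum_cos_ndvd
    intro hdvd
    have h1 : M ∣ m.natAbs := by
      have := Int.natAbs_dvd_natAbs.mpr hdvd
      simpa using this
    have h2 : m.natAbs ≠ 0 := Int.natAbs_ne_zero.mpr h0
    have := Nat.le_of_dvd (Nat.pos_of_ne_zero h2) h1
    omega

noncomputable def Kker (N : ℕ) (t : ℝ) : ℝ :=
  ∑ r ∈ Finset.range N, ∑ s ∈ Finset.range N, Real.cos ((r:ℝ) * t - (s:ℝ) * t)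

lemma Kker_nonneg (N : ℕ) (t : ℝ) : 0 ≤ Kker N t := by
  have h : Kker N t = (∑ r ∈ Finset.range N, Real.cos ((r:ℝ)*t))^2
      + (∑ r ∈ Finset.range N, Real.sin ((r:ℝ)*t))^2 := by
    rw [Kker, sq, sq, Finset.sum_mul_sum, Finset.sum_mul_sum, ← Finset.sum_add_distrib]
    refine Finset.sum_congr rfl fun r _ => ?_
    rw [← Finset.sum_add_distrib]
    exact Finset.sum_congr rfl fun s _ => (Real.cos_sub _ _)
  rw [h]; positivity

noncomputable def tpt (M : ℕ) (j : ℕ) : ℝ := 2 * π / M * j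

lemma count_shift (N a : ℕ) (c : ℝ) :
    ∑ r ∈ Finset.range N, ∑ s ∈ Finset.range N, (if s = r + a then c else 0)
      = (N - a : ℕ) * c := by
  have h1 : ∀ r ∈ Finset.range N,
      (∑ s ∈ Finset.range N, if s = r + a then c else 0)
        = if r + a ∈ Finset.range N then c else 0 := by
    intro r _
    exact Finset.sum_ite_eq' (Finset.range N) (r + a) (fun _ => c)
  rw [Finset.sum_congr rfl h1]
  have h2 : ∀ r ∈ Finset.range N,
      (if r + a ∈ Finset.range N then c else 0)
        = if r ∈ Finset.range (N - a) then c else 0 := by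
    intro r _
    refine if_congr ?_ rfl rfl
    simp only [Finset.mem_range]
    omega
  rw [Finset.sum_congr rfl h2, Finset.sum_ite_mem,
    Finset.inter_eq_right.mpr (Finset.range_subset_range.mpr (by omega))]
  simp [mul_comm]

lemma sum1 (N : ℕ) :
    ∑ j ∈ Finset.range (2*N), Kker N (tpt (2*N) j) = (2*N) * N := by
  unfold Kker
  rw [Finset.sum_comm]
  have h : ∀ r ∈ Finset.range N,
      (∑ j ∈ Finset.range (2*N), ∑ s ∈ Finset.range N,
        Real.cos ((r:ℝ) * tpt (2*N) j - (s:ℝ) * tpt (2*N) j)) = ((2*N : ℕ) : ℝ) := by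
    intro r hr
    simp only [Finset.mem_range] at hr
    rw [Finset.sum_comm]
    have h2 : ∀ s ∈ Finset.range N,
        (∑ j ∈ Finset.range (2*N),
          Real.cos ((r:ℝ) * tpt (2*N) j - (s:ℝ) * tpt (2*N) j))
          = if s = r then ((2*N : ℕ) : ℝ) else 0 := by
      intro s hs
      simp only [Finset.mem_range] at hs
      have hcast : ∀ j : ℕ, (r:ℝ) * tpt (2*N) j - (s:ℝ) * tpt (2*N) j
          = (((r:ℤ) - (s:ℤ) : ℤ) : ℝ) * (2 * π / ((2*N : ℕ) : ℝ) * j) := by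
        intro j; unfold tpt; push_cast; ring
      rw [Finset.sum_congr rfl fun j _ => by rw [hcast j]]
      rw [sum_cos_small (2*N) ((r:ℤ) - (s:ℤ)) (by omega)]
      refine if_congr ?_ rfl rfl
      omega
    rw [Finset.sum_congr rfl h2, Finset.sum_ite_eq' (Finset.range N) r (fun _ => ((2*N:ℕ):ℝ))]
    rw [if_pos (Finset.mem_range.mpr hr)]
  rw [Finset.sum_congr rfl h]
  simp only [Finset.sum_const, Finset.card_range, nsmul_eq_mul]
  push_cast
  ring

lemma sum2 (N : ℕ) (a : ℕ) (ha : a ≤ N) :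
    ∑ j ∈ Finset.range (2*N), Real.cos ((a:ℝ) * tpt (2*N) j) * Kker N (tpt (2*N) j)
      = (2*N) * ((N - a : ℕ) : ℝ) := by
  have hcc : ∀ x y : ℝ, Real.cos x * Real.cos y = (Real.cos (x - y) + Real.cos (x + y))/2 := by
    intro x y; rw [Real.cos_sub, Real.cos_add]; ring
  have hexp : ∀ j, Real.cos ((a:ℝ) * tpt (2*N) j) * Kker N (tpt (2*N) j)
      = ∑ r ∈ Finset.range N, ∑ s ∈ Finset.range N,
          (Real.cos ((((a:ℤ)-(r:ℤ)+(s:ℤ) : ℤ):ℝ) * (2 * π / ((2*N:ℕ):ℝ) * j))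
           + Real.cos ((((a:ℤ)+(r:ℤ)-(s:ℤ) : ℤ):ℝ) * (2 * π / ((2*N:ℕ):ℝ) * j)))/2 := by
    intro j
    rw [Kker, Finset.mul_sum]
    refine Finset.sum_congr rfl fun r _ => ?_
    rw [Finset.mul_sum]
    refine Finset.sum_congr rfl fun s _ => ?_
    rw [hcc]
    have h1 : (a:ℝ) * tpt (2*N) j - ((r:ℝ) * tpt (2*N) j - (s:ℝ) * tpt (2*N) j)
        = (((a:ℤ)-(r:ℤ)+(s:ℤ) : ℤ):ℝ) * (2 * π / ((2*N:ℕ):ℝ) * j) := by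
      unfold tpt; push_cast; ring
    have h2 : (a:ℝ) * tpt (2*N) j + ((r:ℝ) * tpt (2*N) j - (s:ℝ) * tpt (2*N) j)
        = (((a:ℤ)+(r:ℤ)-(s:ℤ) : ℤ):ℝ) * (2 * π / ((2*N:ℕ):ℝ) * j) := by
      unfold tpt; push_cast; ring
    rw [h1, h2]
  rw [Finset.sum_congr rfl fun j _ => hexp j]
  rw [Finset.sum_comm]
  have hin : ∀ r ∈ Finset.range N,
      (∑ j ∈ Finset.range (2*N), ∑ s ∈ Finset.range N,
        (Real.cos ((((a:ℤ)-(r:ℤ)+(s:ℤ) : ℤ):ℝ) * (2 * π / ((2*N:ℕ):ℝ) * j))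
           + Real.cos ((((a:ℤ)+(r:ℤ)-(s:ℤ) : ℤ):ℝ) * (2 * π / ((2*N:ℕ):ℝ) * j)))/2)
      = ∑ s ∈ Finset.range N,
          ((if r = s + a then ((2*N:ℕ):ℝ)/2 else 0) + (if s = r + a then ((2*N:ℕ):ℝ)/2 else 0)) := by
    intro r hr
    simp only [Finset.mem_range] at hr
    rw [Finset.sum_comm]
    refine Finset.sum_congr rfl fun s hs => ?_
    simp only [Finset.mem_range] at hs
    have hsplit : ∀ (A B : ℕ → ℝ),
        (∑ j ∈ Finset.range (2*N), (A j + B j)/2)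
        = ((∑ j ∈ Finset.range (2*N), A j) + (∑ j ∈ Finset.range (2*N), B j))/2 := by
      intro A B
      rw [← Finset.sum_div]
      congr 1
      rw [Finset.sum_add_distrib]
    rw [hsplit]
    rw [sum_cos_small (2*N) ((a:ℤ)-(r:ℤ)+(s:ℤ)) (by omega)]
    rw [sum_cos_small (2*N) ((a:ℤ)+(r:ℤ)-(s:ℤ)) (by omega)]
    have e1 : ((a:ℤ)-(r:ℤ)+(s:ℤ) = 0) ↔ (r = s + a) := by omega
    have e2 : ((a:ℤ)+(r:ℤ)-(s:ℤ) = 0) ↔ (s = r + a) := by omega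
    rw [if_congr e1 rfl rfl, if_congr e2 rfl rfl]
    split_ifs <;> ring
  rw [Finset.sum_congr rfl hin]
  simp only [Finset.sum_add_distrib]
  have hc2 : (∑ r ∈ Finset.range N, ∑ s ∈ Finset.range N,
      (if s = r + a then ((2*N:ℕ):ℝ)/2 else 0)) = ((N - a : ℕ):ℝ) * (((2*N:ℕ):ℝ)/2) :=
    count_shift N a _
  have hc1 : (∑ r ∈ Finset.range N, ∑ s ∈ Finset.range N,
      (if r = s + a then ((2*N:ℕ):ℝ)/2 else 0)) = ((N - a : ℕ):ℝ) * (((2*N:ℕ):ℝ)/2) := by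
    rw [Finset.sum_comm]
    exact count_shift N a _
  rw [hc1, hc2]
  push_cast [Nat.cast_sub ha]
  ring

lemma key_kernel (N : ℕ) (a : ℕ) (ha : a ≤ N) :
    ∑ j ∈ Finset.range (2*N), (1 - Real.cos ((a:ℝ) * tpt (2*N) j)) * Kker N (tpt (2*N) j)
      = (2*N : ℝ) * a := by
  have h : ∀ j, (1 - Real.cos ((a:ℝ) * tpt (2*N) j)) * Kker N (tpt (2*N) j)
      = Kker N (tpt (2*N) j) - Real.cos ((a:ℝ) * tpt (2*N) j) * Kker N (tpt (2*N) j) := by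
    intro j; ring
  rw [Finset.sum_congr rfl fun j _ => h j, Finset.sum_sub_distrib, sum1 N, sum2 N a ha]
  push_cast [Nat.cast_sub ha]
  ring

lemma abs_eq_kernel (N : ℕ) (hN : 0 < N) (k : ℤ) (hk : k.natAbs ≤ N) :
    |(k:ℝ)| = (1/(2*N : ℝ)) * ∑ j ∈ Finset.range (2*N),
      (1 - Real.cos ((k:ℝ) * tpt (2*N) j)) * Kker N (tpt (2*N) j) := by
  have hcos : ∀ t : ℝ, Real.cos ((k:ℝ) * t) = Real.cos ((k.natAbs : ℝ) * t) := by
    intro t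
    rcases Int.natAbs_eq k with h | h
    · have hh : (k:ℝ) = (k.natAbs : ℝ) := by
        have h2 : k = |k| := by rw [Int.abs_eq_natAbs]; exact h
        rw [Nat.cast_natAbs]
        exact_mod_cast h2
      rw [hh]
    · have hh : (k:ℝ) = -(k.natAbs : ℝ) := by
        have h2 : k = -|k| := by rw [Int.abs_eq_natAbs]; exact h
        exact_mod_cast h2
      rw [hh, neg_mul, Real.cos_neg]
  have habs : |(k:ℝ)| = (k.natAbs : ℝ) := by rw [Nat.cast_natAbs, Int.cast_abs]
  rw [habs]
  rw [Finset.sum_congr rfl fun j _ => by rw [hcos (tpt (2*N) j)]]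
  rw [key_kernel N k.natAbs hk]
  have h2N : (2*N : ℝ) ≠ 0 := by positivity
  field_simp

variable {Ω : Type} [MeasurableSpace Ω]

lemma integrable_cos_comp (P : Measure Ω) [IsProbabilityMeasure P] {f : Ω → ℝ} (hf : Measurable f) :
    Integrable (fun ω => Real.cos (f ω)) P := by
  refine Integrable.mono' (integrable_const (1:ℝ))
    ((Real.measurable_cos.comp hf).aestronglyMeasurable) ?_
  exact Filter.Eventually.of_forall fun ω => by
    rw [Real.norm_eq_abs]; exact Real.abs_cos_le_one _

lemma integrable_sin_comp (P : Measure Ω) [IsProbabilityMeasure P] {f : Ω → ℝ} (hf : Measurable f) :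
    Integrable (fun ω => Real.sin (f ω)) P := by
  refine Integrable.mono' (integrable_const (1:ℝ))
    ((Real.measurable_sin.comp hf).aestronglyMeasurable) ?_
  exact Filter.Eventually.of_forall fun ω => by
    rw [Real.norm_eq_abs]; exact Real.abs_sin_le_one _

lemma integral_rep (P : Measure Ω) [IsProbabilityMeasure P] (S : Ω → ℝ) (hS : Measurable S) (N : ℕ) (hN : 0 < N)
    (hval : ∀ ω, ∃ k : ℤ, k.natAbs ≤ N ∧ S ω = k) :
    ∫ ω, |S ω| ∂P = ∑ j ∈ Finset.range (2*N),
      (Kker N (tpt (2*N) j) / (2*N : ℝ)) * (1 - ∫ ω, Real.cos (S ω * tpt (2*N) j) ∂P) := by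
  have h1 : ∀ ω, |S ω| = ∑ j ∈ Finset.range (2*N),
      (Kker N (tpt (2*N) j) / (2*N : ℝ)) * (1 - Real.cos (S ω * tpt (2*N) j)) := by
    intro ω
    obtain ⟨k, hk, hSk⟩ := hval ω
    rw [hSk, abs_eq_kernel N hN k hk, Finset.mul_sum]
    exact Finset.sum_congr rfl fun j _ => by ring
  have h2 : ∫ ω, |S ω| ∂P = ∫ ω, (∑ j ∈ Finset.range (2*N),
      (Kker N (tpt (2*N) j) / (2*N : ℝ)) * (1 - Real.cos (S ω * tpt (2*N) j))) ∂P := by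
    exact integral_congr_ae (Filter.Eventually.of_forall fun ω => h1 ω)
  rw [h2, integral_finset_sum]
  · refine Finset.sum_congr rfl fun j _ => ?_
    rw [MeasureTheory.integral_const_mul]
    congr 1
    rw [integral_sub (integrable_const 1) (integrable_cos_comp P (hS.mul_const _))]
    simp
  · intro j _
    exact (((integrable_const (1:ℝ)).sub (integrable_cos_comp P (hS.mul_const _))).const_mul _)

lemma integral_three (P : Measure Ω) [IsProbabilityMeasure P] (W : Ω → ℝ) (hW : Measurable W)
    (hval : ∀ ω, W ω = -1 ∨ W ω = 0 ∨ W ω = 1) (g : ℝ → ℝ) :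
    ∫ ω, g (W ω) ∂P = g 0 + (g 1 - g 0) * (P {ω | W ω = 1}).toReal
      + (g (-1) - g 0) * (P {ω | W ω = -1}).toReal := by
  have hs1 : MeasurableSet {ω | W ω = 1} := hW (measurableSet_singleton 1)
  have hs2 : MeasurableSet {ω | W ω = -1} := hW (measurableSet_singleton (-1))
  have heq : (fun ω => g (W ω)) = fun ω => g 0
      + ({ω | W ω = 1}.indicator (fun _ => g 1 - g 0) ω
        + {ω | W ω = -1}.indicator (fun _ => g (-1) - g 0) ω) := by
    funext ω
    rcases hval ω with h | h | h <;>
      simp only [Set.indicator_apply, Set.mem_setOf_eq, h] <;> norm_num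
  rw [heq, integral_add (integrable_const _), integral_const]
  · rw [integral_add ((integrable_const _).indicator hs1) ((integrable_const _).indicator hs2)]
    rw [integral_indicator_const _ hs1, integral_indicator_const _ hs2]
    simp [smul_eq_mul]
    simp only [measureReal_def]
    ring
  · exact ((integrable_const _).indicator hs1).add ((integrable_const _).indicator hs2)

lemma integrable_bdd_prod (P : Measure Ω) [IsProbabilityMeasure P] {f g : Ω → ℝ} (hf : Measurable f) (hg : Measurable g)
    (hbf : ∀ ω, |f ω| ≤ 1) (hbg : ∀ ω, |g ω| ≤ 1) :
    Integrable (fun ω => f ω * g ω) P := by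
  refine Integrable.mono' (integrable_const (1:ℝ)) ((hf.mul hg).aestronglyMeasurable) ?_
  refine Filter.Eventually.of_forall fun ω => ?_
  rw [Real.norm_eq_abs, abs_mul]
  exact mul_le_one₀ (hbf ω) (abs_nonneg _) (hbg ω)

lemma charfun {n : ℕ} (P : Measure Ω) [IsProbabilityMeasure P] (X : Fin n → Ω → ℝ) (hmeas : ∀ i, Measurable (X i))
    (hval : ∀ i ω, X i ω = -1 ∨ X i ω = 0 ∨ X i ω = 1)
    (q : Fin n → ℝ) (hq0 : ∀ i, 0 ≤ q i)
    (hq1 : ∀ i, P {ω | X i ω = 1} = ENNReal.ofReal (q i))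
    (hq2 : ∀ i, P {ω | X i ω = -1} = ENNReal.ofReal (q i))
    (hindep : iIndepFun X P)
    (s : Finset (Fin n)) (t : ℝ) :
    (∫ ω, Real.cos ((∑ i ∈ s, X i ω) * t) ∂P
        = ∏ i ∈ s, (1 - 2 * q i * (1 - Real.cos t)))
      ∧ (∫ ω, Real.sin ((∑ i ∈ s, X i ω) * t) ∂P = 0) := by
  classical
  induction s using Finset.induction_on with
  | empty => simp
  | @insert a s ha ih =>
    have hmcos : Measurable (fun x : ℝ => Real.cos (x * t)) :=
      Real.measurable_cos.comp (measurable_id.mul_const t)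
    have hmsin : Measurable (fun x : ℝ => Real.sin (x * t)) :=
      Real.measurable_sin.comp (measurable_id.mul_const t)
    have hSmeas : Measurable (fun ω => ∑ i ∈ s, X i ω) := by
      apply Finset.measurable_sum
      exact fun i _ => hmeas i
    have hInd : IndepFun (X a) (fun ω => ∑ i ∈ s, X i ω) P := by
      have h := (hindep.indepFun_finsetSum_of_notMem hmeas ha).symm
      have hfun : (∑ j ∈ s, X j) = (fun ω => ∑ i ∈ s, X i ω) := by
        funext ω
        exact Finset.sum_apply ω s X
      rwa [hfun] at h
    have hIndCC : IndepFun (fun ω => Real.cos (X a ω * t))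
        (fun ω => Real.cos ((∑ i ∈ s, X i ω) * t)) P := hInd.comp hmcos hmcos
    have hIndSS : IndepFun (fun ω => Real.sin (X a ω * t))
        (fun ω => Real.sin ((∑ i ∈ s, X i ω) * t)) P := hInd.comp hmsin hmsin
    have hIndSC : IndepFun (fun ω => Real.sin (X a ω * t))
        (fun ω => Real.cos ((∑ i ∈ s, X i ω) * t)) P := hInd.comp hmsin hmcos
    have hIndCS : IndepFun (fun ω => Real.cos (X a ω * t))
        (fun ω => Real.sin ((∑ i ∈ s, X i ω) * t)) P := hInd.comp hmcos hmsin
    have hcosa : ∫ ω, Real.cos (X a ω * t) ∂P = 1 - 2 * q a * (1 - Real.cos t) := by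
      rw [integral_three P (X a) (hmeas a) (hval a) (fun x => Real.cos (x * t))]
      simp only [zero_mul, Real.cos_zero, one_mul, neg_mul, Real.cos_neg,
        hq1 a, hq2 a, ENNReal.toReal_ofReal (hq0 a)]
      ring
    have hsina : ∫ ω, Real.sin (X a ω * t) ∂P = 0 := by
      rw [integral_three P (X a) (hmeas a) (hval a) (fun x => Real.sin (x * t))]
      simp only [zero_mul, Real.sin_zero, one_mul, neg_mul, Real.sin_neg,
        hq1 a, hq2 a, ENNReal.toReal_ofReal (hq0 a)]
      ring
    have hrw : ∀ ω, (∑ i ∈ insert a s, X i ω) * t = X a ω * t + (∑ i ∈ s, X i ω) * t := by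
      intro ω
      rw [Finset.sum_insert ha]
      ring
    have habs : ∀ x : ℝ, |Real.cos (x * t)| ≤ 1 := fun x => Real.abs_cos_le_one _
    have habs' : ∀ x : ℝ, |Real.sin (x * t)| ≤ 1 := fun x => Real.abs_sin_le_one _
    have hi1 : Integrable (fun ω => Real.cos (X a ω * t)
        * Real.cos ((∑ i ∈ s, X i ω) * t)) P :=
      integrable_bdd_prod P (hmcos.comp (hmeas a)) (hmcos.comp hSmeas)
        (fun ω => habs _) (fun ω => habs _)
    have hi2 : Integrable (fun ω => Real.sin (X a ω * t)
        * Real.sin ((∑ i ∈ s, X i ω) * t)) P :=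
      integrable_bdd_prod P (hmsin.comp (hmeas a)) (hmsin.comp hSmeas)
        (fun ω => habs' _) (fun ω => habs' _)
    have hi3 : Integrable (fun ω => Real.sin (X a ω * t)
        * Real.cos ((∑ i ∈ s, X i ω) * t)) P :=
      integrable_bdd_prod P (hmsin.comp (hmeas a)) (hmcos.comp hSmeas)
        (fun ω => habs' _) (fun ω => habs _)
    have hi4 : Integrable (fun ω => Real.cos (X a ω * t)
        * Real.sin ((∑ i ∈ s, X i ω) * t)) P :=
      integrable_bdd_prod P (hmcos.comp (hmeas a)) (hmsin.comp hSmeas)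
        (fun ω => habs _) (fun ω => habs' _)
    constructor
    · have : ∀ ω, Real.cos ((∑ i ∈ insert a s, X i ω) * t)
          = Real.cos (X a ω * t) * Real.cos ((∑ i ∈ s, X i ω) * t)
            - Real.sin (X a ω * t) * Real.sin ((∑ i ∈ s, X i ω) * t) := by
        intro ω
        rw [hrw ω, Real.cos_add]
      rw [integral_congr_ae (Filter.Eventually.of_forall this), integral_sub hi1 hi2]
      rw [hIndCC.integral_fun_mul_eq_mul_integral ((hmcos.comp (hmeas a)).aestronglyMeasurable)
        ((hmcos.comp hSmeas).aestronglyMeasurable)]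
      rw [hIndSS.integral_fun_mul_eq_mul_integral ((hmsin.comp (hmeas a)).aestronglyMeasurable)
        ((hmsin.comp hSmeas).aestronglyMeasurable)]
      rw [hcosa, hsina, ih.1, ih.2, Finset.prod_insert ha]
      ring
    · have : ∀ ω, Real.sin ((∑ i ∈ insert a s, X i ω) * t)
          = Real.sin (X a ω * t) * Real.cos ((∑ i ∈ s, X i ω) * t)
            + Real.cos (X a ω * t) * Real.sin ((∑ i ∈ s, X i ω) * t) := by
        intro ω
        rw [hrw ω, Real.sin_add]
      rw [integral_congr_ae (Filter.Eventually.of_forall this), integral_add hi3 hi4]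
      rw [hIndSC.integral_fun_mul_eq_mul_integral ((hmsin.comp (hmeas a)).aestronglyMeasurable)
        ((hmcos.comp hSmeas).aestronglyMeasurable)]
      rw [hIndCS.integral_fun_mul_eq_mul_integral ((hmcos.comp (hmeas a)).aestronglyMeasurable)
        ((hmsin.comp hSmeas).aestronglyMeasurable)]
      rw [hsina, ih.2]
      ring

lemma sum_int_valued {n : ℕ} (X : Fin n → Ω → ℝ)
    (hval : ∀ i ω, X i ω = -1 ∨ X i ω = 0 ∨ X i ω = 1) (ω : Ω) (s : Finset (Fin n)) :
    ∃ k : ℤ, k.natAbs ≤ s.card ∧ ∑ i ∈ s, X i ω = k := by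
  classical
  induction s using Finset.induction_on with
  | empty => exact ⟨0, by simp, by simp⟩
  | @insert a s ha ih =>
    obtain ⟨k, hk, hsum⟩ := ih
    rcases hval a ω with h | h | h
    · refine ⟨k - 1, ?_, ?_⟩
      · rw [Finset.card_insert_of_notMem ha]; omega
      · rw [Finset.sum_insert ha, hsum, h]; push_cast; ring
    · refine ⟨k, ?_, ?_⟩
      · rw [Finset.card_insert_of_notMem ha]; omega
      · rw [Finset.sum_insert ha, hsum, h]; ring
    · refine ⟨k + 1, ?_, ?_⟩
      · rw [Finset.card_insert_of_notMem ha]; omega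
      · rw [Finset.sum_insert ha, hsum, h]; push_cast; ring

set_option maxHeartbeats 1000000 in
/-- Lemma B.8: for `p₁, …, pₙ ∈ [0, 1/16]`, `fₙ(4p₁, …, 4pₙ) ≥ 2 fₙ(p₁, …, pₙ)`: if
`X₁, …, Xₙ` are independent symmetric `{-1,0,1}` variables with `P[Xᵢ = 1] = 4pᵢ` and
`Y₁, …, Yₙ` are independent symmetric `{-1,0,1}` variables with `P[Yᵢ = 1] = pᵢ`, then
`E|∑ Xᵢ| ≥ 2 E|∑ Yᵢ|`. -/
theorem symmetric_sum_L1_quadruple (n : ℕ) (p : Fin n → ℝ)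
    (hp : ∀ i, p i ∈ Set.Icc (0:ℝ) (1 / 16))
    (Ω₁ : Type) [MeasurableSpace Ω₁] (P₁ : Measure Ω₁) [IsProbabilityMeasure P₁]
    (Ω₂ : Type) [MeasurableSpace Ω₂] (P₂ : Measure Ω₂) [IsProbabilityMeasure P₂]
    (X : Fin n → Ω₁ → ℝ) (hXmeas : ∀ i, Measurable (X i))
    (hXval : ∀ i ω, X i ω = -1 ∨ X i ω = 0 ∨ X i ω = 1)
    (hXprob1 : ∀ i, P₁ {ω | X i ω = 1} = ENNReal.ofReal (4 * p i))
    (hXprob2 : ∀ i, P₁ {ω | X i ω = -1} = ENNReal.ofReal (4 * p i))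
    (hXindep : iIndepFun X P₁)
    (Y : Fin n → Ω₂ → ℝ) (hYmeas : ∀ i, Measurable (Y i))
    (hYval : ∀ i ω, Y i ω = -1 ∨ Y i ω = 0 ∨ Y i ω = 1)
    (hYprob1 : ∀ i, P₂ {ω | Y i ω = 1} = ENNReal.ofReal (p i))
    (hYprob2 : ∀ i, P₂ {ω | Y i ω = -1} = ENNReal.ofReal (p i))
    (hYindep : iIndepFun Y P₂) :
    2 * ∫ ω, |∑ i, Y i ω| ∂P₂ ≤ ∫ ω, |∑ i, X i ω| ∂P₁ := by
  classical
  set N : ℕ := 2 * n + 1 with hN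
  have hNpos : 0 < N := by omega
  have hq0X : ∀ i, 0 ≤ 4 * p i := fun i => by nlinarith [(hp i).1]
  -- X side
  have hSXmeas : Measurable (fun ω => ∑ i, X i ω) :=
    Finset.measurable_sum Finset.univ (fun i _ => hXmeas i)
  have hSXval : ∀ ω, ∃ k : ℤ, k.natAbs ≤ N ∧ (∑ i, X i ω) = k := by
    intro ω
    obtain ⟨k, hk, hsum⟩ := sum_int_valued X hXval ω Finset.univ
    refine ⟨k, ?_, hsum⟩
    simp only [Finset.card_univ, Fintype.card_fin] at hk
    omega
  have hXrep : ∫ ω, |∑ i, X i ω| ∂P₁ = ∑ j ∈ Finset.range (2*N),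
      (Kker N (tpt (2*N) j) / (2*N : ℝ))
        * (1 - ∫ ω, Real.cos ((∑ i, X i ω) * tpt (2*N) j) ∂P₁) :=
    integral_rep P₁ (fun ω => ∑ i, X i ω) hSXmeas N hNpos hSXval
  have hXchar : ∀ t : ℝ, ∫ ω, Real.cos ((∑ i, X i ω) * t) ∂P₁
      = ∏ i, (1 - 2 * (4 * p i) * (1 - Real.cos t)) := by
    intro t
    exact (charfun P₁ X hXmeas hXval (fun i => 4 * p i) hq0X
      hXprob1 hXprob2 hXindep Finset.univ t).1
  -- Y side
  have hSYmeas : Measurable (fun ω => ∑ i, Y i ω) :=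
    Finset.measurable_sum Finset.univ (fun i _ => hYmeas i)
  have hTmeas : Measurable (fun ω => 2 * ∑ i, Y i ω) := hSYmeas.const_mul 2
  have hTval : ∀ ω, ∃ k : ℤ, k.natAbs ≤ N ∧ (2 * ∑ i, Y i ω) = k := by
    intro ω
    obtain ⟨k, hk, hsum⟩ := sum_int_valued Y hYval ω Finset.univ
    refine ⟨2 * k, ?_, by rw [hsum]; push_cast; ring⟩
    simp only [Finset.card_univ, Fintype.card_fin] at hk
    omega
  have hTrep : ∫ ω, |2 * ∑ i, Y i ω| ∂P₂ = ∑ j ∈ Finset.range (2*N),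
      (Kker N (tpt (2*N) j) / (2*N : ℝ))
        * (1 - ∫ ω, Real.cos ((2 * ∑ i, Y i ω) * tpt (2*N) j) ∂P₂) :=
    integral_rep P₂ (fun ω => 2 * ∑ i, Y i ω) hTmeas N hNpos hTval
  have hYchar : ∀ t : ℝ, ∫ ω, Real.cos ((∑ i, Y i ω) * t) ∂P₂
      = ∏ i, (1 - 2 * p i * (1 - Real.cos t)) := by
    intro t
    exact (charfun P₂ Y hYmeas hYval p
      (fun i => (hp i).1) hYprob1 hYprob2 hYindep Finset.univ t).1
  have h2Y : 2 * ∫ ω, |∑ i, Y i ω| ∂P₂ = ∫ ω, |2 * ∑ i, Y i ω| ∂P₂ := by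
    rw [← MeasureTheory.integral_const_mul]
    refine integral_congr_ae (Filter.Eventually.of_forall fun ω => ?_)
    show 2 * |∑ i, Y i ω| = |2 * ∑ i, Y i ω|
    rw [abs_mul]
    norm_num
  rw [h2Y, hTrep, hXrep]
  apply Finset.sum_le_sum
  intro j _
  have hK : 0 ≤ Kker N (tpt (2*N) j) / (2*N : ℝ) := by
    apply div_nonneg (Kker_nonneg N _)
    positivity
  apply mul_le_mul_of_nonneg_left _ hK
  have hcosT : ∫ ω, Real.cos ((2 * ∑ i, Y i ω) * tpt (2*N) j) ∂P₂
      = ∏ i, (1 - 2 * p i * (1 - Real.cos (2 * tpt (2*N) j))) := by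
    rw [← hYchar (2 * tpt (2*N) j)]
    refine integral_congr_ae (Filter.Eventually.of_forall fun ω => ?_)
    show Real.cos ((2 * ∑ i, Y i ω) * tpt (2*N) j)
        = Real.cos ((∑ i, Y i ω) * (2 * tpt (2*N) j))
    have harg : (∑ i, Y i ω) * (2 * tpt (2*N) j) = (2 * ∑ i, Y i ω) * tpt (2*N) j := by ring
    rw [harg]
  rw [hcosT]
  rw [hXchar (tpt (2*N) j)]
  have hprod : ∏ i, (1 - 2 * (4 * p i) * (1 - Real.cos (tpt (2*N) j)))
      ≤ ∏ i, (1 - 2 * p i * (1 - Real.cos (2 * tpt (2*N) j))) := by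
    apply Finset.prod_le_prod
    · intro i _
      nlinarith [(hp i).1, (hp i).2, Real.neg_one_le_cos (tpt (2*N) j), Real.cos_le_one (tpt (2*N) j)]
    · intro i _
      have hc2 : Real.cos (2 * tpt (2*N) j) = 2 * Real.cos (tpt (2*N) j) ^ 2 - 1 :=
        Real.cos_two_mul _
      have hsq : 0 ≤ 4 * p i * (1 - Real.cos (tpt (2*N) j))^2 := by
        apply mul_nonneg
        · linarith [(hp i).1]
        · exact sq_nonneg _
      nlinarith [hsq, hc2, (hp i).1]
  linarith
end

section
/- There exists n_0 such that the following holds for all n ≥ n_0: let L be an integer with L ≥ 10^5·log n, and let ρ ≥ 1 − 10^{-8}·L^{-2}. Let X and Y be independent standard normal random variables, let μ be a real number, let ρ_0 ∈ [ρ, 1], and set G = μ + X and H = μ + ρ_0·X + √(1−ρ_0²)·Y. Let m be an integer with μ − (log n)^{2/3} ≤ m/L and (m+1)/L ≤ μ + (log n)^{2/3}, and set I_m = [m/L, (m+1)/L). Then 100·P[G ∈ I_m and H ∉ I_m] ≤ P[G ∈ I_m]. -/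
open MeasureTheory ProbabilityTheory

open scoped ENNReal NNReal
open Real

lemma gauss_pdf_ratio {a x : ℝ} (h : x ^ 2 ≤ a ^ 2 + 2 * Real.log 2) :
    gaussianPDFReal 0 1 a ≤ 2 * gaussianPDFReal 0 1 x := by
  unfold gaussianPDFReal
  simp only [NNReal.coe_one, mul_one, sub_zero]
  rw [show (2:ℝ) * ((Real.sqrt (2 * π))⁻¹ * rexp (-x ^ 2 / 2))
      = (Real.sqrt (2 * π))⁻¹ * (2 * rexp (-x ^ 2 / 2)) by ring]
  have hc : (0:ℝ) ≤ (Real.sqrt (2 * π))⁻¹ := by positivity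
  refine mul_le_mul_of_nonneg_left ?_ hc
  rw [show (2:ℝ) * rexp (-x ^ 2 / 2) = rexp (Real.log 2 + -x ^ 2 / 2) by
    rw [Real.exp_add, Real.exp_log two_pos], Real.exp_le_exp]
  linarith

lemma gauss_tail_le : gaussianReal 0 1 {y : ℝ | 7 < |y|} ≤ ENNReal.ofReal (1/1000) := by
  have hT : MeasurableSet {y : ℝ | 7 < |y|} :=
    measurableSet_lt measurable_const measurable_id.abs
  rw [gaussianReal_apply_eq_integral _ one_ne_zero]
  refine ENNReal.ofReal_le_ofReal ?_
  have hint : Integrable (fun y : ℝ => Real.exp (-12) * Real.exp (-(1/4) * y ^ 2)) := by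
    exact (integrable_exp_neg_mul_sq (by norm_num : (0:ℝ) < 1/4)).const_mul _
  have h1 : ∫ y in {y : ℝ | 7 < |y|}, gaussianPDFReal 0 1 y
      ≤ ∫ y in {y : ℝ | 7 < |y|}, Real.exp (-12) * Real.exp (-(1/4) * y ^ 2) := by
    refine setIntegral_mono_on ((integrable_gaussianPDFReal 0 1).integrableOn)
      hint.integrableOn hT ?_
    intro y hy
    simp only [Set.mem_setOf_eq] at hy
    unfold gaussianPDFReal
    simp only [NNReal.coe_one, mul_one, sub_zero]
    have hy2 : (48:ℝ) ≤ y ^ 2 := by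
      have : (7:ℝ) ≤ |y| := hy.le
      nlinarith [sq_abs y]
    have hcoef : (Real.sqrt (2 * π))⁻¹ ≤ 1 := by
      rw [inv_le_one_iff₀]
      right
      rw [show (1:ℝ) = Real.sqrt 1 by simp]
      exact Real.sqrt_le_sqrt (by nlinarith [Real.pi_gt_three])
    calc (Real.sqrt (2 * π))⁻¹ * Real.exp (-y ^ 2 / 2)
        ≤ 1 * Real.exp (-y ^ 2 / 2) := by
          exact mul_le_mul_of_nonneg_right hcoef (Real.exp_nonneg _)
      _ = Real.exp (-y ^ 2 / 2) := one_mul _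
      _ ≤ Real.exp (-12) * Real.exp (-(1/4) * y ^ 2) := by
          rw [← Real.exp_add, Real.exp_le_exp]
          linarith
  have h2 : ∫ y in {y : ℝ | 7 < |y|}, Real.exp (-12) * Real.exp (-(1/4) * y ^ 2)
      ≤ ∫ y : ℝ, Real.exp (-12) * Real.exp (-(1/4) * y ^ 2) := by
    refine setIntegral_le_integral hint (ae_of_all _ fun y => by positivity)
  have h3 : ∫ y : ℝ, Real.exp (-12) * Real.exp (-(1/4) * y ^ 2)
      = Real.exp (-12) * Real.sqrt (π / (1/4)) := by
    rw [integral_const_mul, integral_gaussian]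
  have h4 : Real.sqrt (π / (1/4)) ≤ 4 :=
    (Real.sqrt_le_left (by norm_num)).2 (by nlinarith [Real.pi_le_four])
  have h5 : Real.exp (-12) ≤ 1/4000 := by
    have h2e : (2:ℝ) ≤ Real.exp 1 := le_of_lt (lt_trans (by norm_num) Real.exp_one_gt_d9)
    have hb : (4000:ℝ) ≤ Real.exp 12 := by
      calc (4000:ℝ) ≤ 2 ^ 12 := by norm_num
        _ ≤ Real.exp 1 ^ 12 := by gcongr
        _ = Real.exp 12 := by rw [← Real.exp_nat_mul]; norm_num
    rw [Real.exp_neg, show (1:ℝ)/4000 = ((4000:ℝ))⁻¹ by norm_num]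
    gcongr
  calc ∫ y in {y : ℝ | 7 < |y|}, gaussianPDFReal 0 1 y
      ≤ Real.exp (-12) * Real.sqrt (π / (1/4)) := by rw [← h3]; exact h1.trans h2
    _ ≤ (1/4000) * 4 := by
        exact mul_le_mul h5 h4 (Real.sqrt_nonneg _) (by norm_num)
    _ ≤ 1/1000 := by norm_num

set_option maxHeartbeats 2000000 in
/-- Lemma C.4 (2): there is `n₀` such that for all `n ≥ n₀`, for a bivariate normal pair
`(G, H)` with means `μ₀`, unit variances and correlation `ρ₀ ≥ ρ ≥ 1 - 10⁻⁸ L⁻²`, with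
`L ≥ 10⁵ log n`, and a good bin `I_m = [m/L, (m+1)/L)`, one has
`100 P[G ∈ I_m, H ∉ I_m] ≤ P[G ∈ I_m]`. -/
theorem gaussian_bin_correlated_prob :
    ∃ n₀ : ℕ, ∀ n : ℕ, n₀ ≤ n → ∀ L : ℕ, 10 ^ 5 * Real.log n ≤ (L : ℝ) →
    ∀ ρ : ℝ, 1 - 1 / (10 ^ 8 * (L : ℝ) ^ 2) ≤ ρ →
    ∀ (Ω : Type) (_ : MeasurableSpace Ω) (P : Measure Ω), IsProbabilityMeasure P →
    ∀ (X Y : Ω → ℝ), Measurable X → Measurable Y →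
      Measure.map X P = gaussianReal 0 1 → Measure.map Y P = gaussianReal 0 1 →
      IndepFun X Y P →
    ∀ (μ₀ ρ₀ : ℝ), ρ₀ ∈ Set.Icc ρ 1 →
    ∀ (G H : Ω → ℝ), (∀ ω, G ω = μ₀ + X ω) →
      (∀ ω, H ω = μ₀ + ρ₀ * X ω + Real.sqrt (1 - ρ₀ ^ 2) * Y ω) →
    ∀ m : ℤ, μ₀ - Real.log n ^ ((2:ℝ) / 3) ≤ (m : ℝ) / L →
      ((m : ℝ) + 1) / L ≤ μ₀ + Real.log n ^ ((2:ℝ) / 3) →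
    100 * P {ω | G ω ∈ Set.Ico ((m : ℝ) / L) (((m : ℝ) + 1) / L) ∧
          H ω ∉ Set.Ico ((m : ℝ) / L) (((m : ℝ) + 1) / L)} ≤
      P {ω | G ω ∈ Set.Ico ((m : ℝ) / L) (((m : ℝ) + 1) / L)} := by
  refine ⟨3, ?_⟩
  intro n hn L hL ρ hρ Ω mΩ P hP X Y hX hY hmapX hmapY hIndep μ₀ ρ₀ hρ₀ G H hG hH m hm1 hm2
  obtain ⟨hρ₀l, hρ₀u⟩ := hρ₀
  set Lr : ℝ := (L : ℝ) with hLr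
  have hlog : 1 ≤ Real.log n := by
    have h3 : (3:ℝ) ≤ (n:ℝ) := by exact_mod_cast hn
    rw [Real.le_log_iff_exp_le (by linarith)]
    have := Real.exp_one_lt_d9
    linarith [this]
  have hLpos : (0:ℝ) < Lr := lt_of_lt_of_le (by nlinarith) hL
  set W : ℝ := Real.log n ^ ((2:ℝ)/3) with hWdef
  have hW0 : 0 ≤ W := Real.rpow_nonneg (by linarith) _
  have hWlog : W ≤ Real.log n := by
    calc W ≤ Real.log n ^ ((1:ℝ)) := Real.rpow_le_rpow_of_exponent_le hlog (by norm_num)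
      _ = Real.log n := Real.rpow_one _
  have hWL : 10^5 * W ≤ Lr := le_trans (by nlinarith) hL
  set u : ℝ := (m:ℝ)/Lr with hu
  set v : ℝ := ((m:ℝ)+1)/Lr with hv
  set a : ℝ := u - μ₀ with ha
  set b : ℝ := v - μ₀ with hb
  have hba : b = a + 1/Lr := by
    rw [hb, ha, hu, hv]
    field_simp
    ring
  have haW : -W ≤ a := by rw [ha]; linarith
  have hbW : b ≤ W := by rw [hb]; linarith
  set s : ℝ := Real.sqrt (1 - ρ₀^2) with hsdef
  have hδ0 : 0 ≤ 1 - ρ₀ := by linarith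
  have hδ : 1 - ρ₀ ≤ 1/(10^8 * Lr^2) := by linarith
  have hρ₀0 : 0 ≤ ρ₀ := by
    have h1 : 1/(10^8 * Lr^2) ≤ 1 := by
      rw [div_le_one (by positivity)]
      nlinarith
    linarith
  have hs0 : 0 ≤ s := Real.sqrt_nonneg _
  have hsle : s ≤ 142/(10^6 * Lr) := by
    rw [hsdef, Real.sqrt_le_left (by positivity)]
    have h2δ : 1 - ρ₀^2 ≤ 2 * (1 - ρ₀) := by nlinarith
    have h2' : 2 * (1 - ρ₀) ≤ 2/(10^8 * Lr^2) := by
      rw [div_eq_mul_one_div]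
      nlinarith
    calc 1 - ρ₀^2 ≤ 2/(10^8 * Lr^2) := by linarith
      _ ≤ (142/(10^6 * Lr))^2 := by
          have he : (142/(10^6 * Lr))^2 = 20164/((10^6:ℝ)^2 * Lr^2) := by
            rw [div_pow, mul_pow]; norm_num
          rw [he, div_le_div_iff₀ (by positivity) (by positivity)]
          nlinarith [sq_nonneg Lr]
  set t : ℝ := (11/10^4) * (1/Lr) with htdef
  have ht0 : 0 < t := by positivity
  have htb : t ≤ 1/Lr := by
    rw [htdef]
    nlinarith [one_div_pos.2 hLpos]
  have hδW : (1 - ρ₀) * W ≤ (1/10^4) * (1/Lr) := by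
    have hWb : W ≤ Lr/10^5 := by rw [le_div_iff₀ (by norm_num)]; linarith
    have step1 : (1-ρ₀)*W ≤ (1/(10^8*Lr^2)) * (Lr/10^5) :=
      mul_le_mul hδ hWb hW0 (by positivity)
    have step2 : (1/(10^8*Lr^2)) * (Lr/10^5) ≤ (1/10^4)*(1/Lr) := by
      rw [show (1:ℝ)/(10^8*Lr^2) * (Lr/10^5) = Lr/(10^13*Lr^2) by ring,
        show (1:ℝ)/10^4*(1/Lr) = 1/(10^4*Lr) by ring,
        div_le_div_iff₀ (by positivity) (by positivity)]
      nlinarith [sq_nonneg Lr, hLpos]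
    linarith
  have h7s : 7 * s ≤ (10/10^4) * (1/Lr) := by
    have h1 : 7*s ≤ 7*(142/(10^6*Lr)) := by linarith
    have h2 : 7*(142/(10^6*Lr)) ≤ (10/10^4) * (1/Lr) := by
      rw [show (7:ℝ)*(142/(10^6*Lr)) = 994/(10^6*Lr) by ring,
        show (10:ℝ)/10^4*(1/Lr) = 1000/(10^6*Lr) by ring]
      gcongr
      norm_num
    linarith
  -- event decomposition
  set T : Set ℝ := {y : ℝ | 7 < |y|} with hTdef
  have hTmeas : MeasurableSet T := measurableSet_lt measurable_const measurable_id.abs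
  have hsub : {ω | G ω ∈ Set.Ico u v ∧ H ω ∉ Set.Ico u v}
      ⊆ (X ⁻¹' Set.Icc a (a+t) ∪ X ⁻¹' Set.Icc (b-t) b) ∪
        (X ⁻¹' Set.Ico a b ∩ Y ⁻¹' T) := by
    rintro ω ⟨h1, h2⟩
    rw [Set.mem_Ico] at h1
    rw [hG ω] at h1
    have hxl : a ≤ X ω := by rw [ha]; linarith [h1.1]
    have hxr : X ω < b := by rw [hb]; linarith [h1.2]
    by_cases hy : 7 < |Y ω|
    · exact Or.inr ⟨Set.mem_Ico.2 ⟨hxl, hxr⟩, hy⟩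
    · push_neg at hy
      left
      have hXW : |X ω| ≤ W := abs_le.2 ⟨by linarith, by linarith⟩
      have key : X ω ≤ a + t ∨ b - t ≤ X ω := by
        by_contra hcon
        push_neg at hcon
        obtain ⟨hc1, hc2⟩ := hcon
        have hd1 : |(1 - ρ₀) * X ω| ≤ (1/10^4) * (1/Lr) := by
          rw [abs_mul, abs_of_nonneg hδ0]
          calc (1 - ρ₀) * |X ω| ≤ (1 - ρ₀) * W :=
                mul_le_mul_of_nonneg_left hXW hδ0
            _ ≤ (1/10^4) * (1/Lr) := hδW
        have hd2 : |s * Y ω| ≤ (10/10^4) * (1/Lr) := by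
          rw [abs_mul, abs_of_nonneg hs0]
          calc s * |Y ω| ≤ s * 7 := mul_le_mul_of_nonneg_left hy hs0
            _ = 7 * s := by ring
            _ ≤ (10/10^4) * (1/Lr) := h7s
        have hd : |ρ₀ * X ω + s * Y ω - X ω| ≤ t := by
          rw [show ρ₀ * X ω + s * Y ω - X ω = -((1 - ρ₀) * X ω) + s * Y ω by ring]
          calc |-((1 - ρ₀) * X ω) + s * Y ω|
              ≤ |-((1 - ρ₀) * X ω)| + |s * Y ω| := abs_add_le _ _
            _ = |(1 - ρ₀) * X ω| + |s * Y ω| := by rw [abs_neg]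
            _ ≤ (1/10^4) * (1/Lr) + (10/10^4) * (1/Lr) := add_le_add hd1 hd2
            _ = t := by rw [htdef]; ring
        obtain ⟨hdl, hdr⟩ := abs_le.1 hd
        refine h2 (Set.mem_Ico.2 ⟨?_, ?_⟩)
        · rw [hH ω]
          have : a ≤ ρ₀ * X ω + s * Y ω := by linarith
          rw [ha] at this; linarith
        · rw [hH ω]
          have : ρ₀ * X ω + s * Y ω < b := by linarith
          rw [hb] at this; linarith
      rcases key with hk | hk
      · exact Or.inl (Set.mem_Icc.2 ⟨hxl, hk⟩)
      · exact Or.inr (Set.mem_Icc.2 ⟨hk, hxr.le⟩)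
  -- pdf bounds
  set g : ℝ → ℝ := gaussianPDFReal 0 1 with hgdef
  set p : ℝ := g a with hpdef
  have hp0 : 0 < p := gaussianPDFReal_pos _ _ _ one_ne_zero
  have hsq : ∀ x ∈ Set.Icc a b, x^2 ≤ a^2 + 2*Real.log 2 ∧ a^2 ≤ x^2 + 2*Real.log 2 := by
    intro x hx
    obtain ⟨hx1, hx2⟩ := hx
    have hxa1 : x - a ≤ 1/Lr := by rw [hba] at hx2; linarith
    have hxa0 : 0 ≤ x - a := by linarith
    have hxW : |x| ≤ W := abs_le.2 ⟨by linarith, by linarith⟩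
    have haW' : |a| ≤ W := abs_le.2 ⟨haW, by rw [hba] at hbW; nlinarith [one_div_pos.2 hLpos]⟩
    have hsum : x + a ≤ 2*W ∧ -(2*W) ≤ x + a := by
      constructor <;> cases' abs_le.1 hxW with p1 p2 <;> cases' abs_le.1 haW' with q1 q2 <;> linarith
    have hWoverL : W * (1/Lr) ≤ 1/10^5 := by
      rw [mul_one_div, div_le_div_iff₀ hLpos (by norm_num)]
      linarith
    have hlog2 : (0.69:ℝ) ≤ Real.log 2 := by linarith [Real.log_two_gt_d9]
    have P1 : 0 ≤ (x - a) * (2*W - (x + a)) := mul_nonneg hxa0 (by linarith [hsum.1])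
    have P2 : 0 ≤ (x - a) * (x + a + 2*W) := mul_nonneg hxa0 (by linarith [hsum.2])
    have P3 : 0 ≤ (1/Lr - (x - a)) * (2*W) := mul_nonneg (by linarith) (by linarith)
    constructor
    · nlinarith [hWoverL]
    · nlinarith [hWoverL]
  have hub : ∀ x ∈ Set.Icc a b, g x ≤ 2 * p := by
    intro x hx
    exact gauss_pdf_ratio (hsq x hx).2
  have hlb : ∀ x ∈ Set.Icc a b, p / 2 ≤ g x := by
    intro x hx
    have h := gauss_pdf_ratio (hsq x hx).1
    have h' : p ≤ 2 * g x := h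
    linarith
  have hiA : a + t ≤ b := by rw [hba]; linarith
  have hiB : a ≤ b - t := by rw [hba]; linarith
  have hI1 : ∫ x in Set.Icc a (a+t), g x ≤ 2*p*t := by
    calc ∫ x in Set.Icc a (a+t), g x ≤ ∫ _x in Set.Icc a (a+t), 2*p :=
        setIntegral_mono_on ((integrable_gaussianPDFReal 0 1).integrableOn)
          (integrableOn_const (by rw [Real.volume_Icc]; exact ENNReal.ofReal_ne_top))
          measurableSet_Icc (fun x hx => hub x (Set.Icc_subset_Icc_right hiA hx))
      _ = (volume (Set.Icc a (a+t))).toReal * (2*p) := by rw [setIntegral_const, smul_eq_mul, measureReal_def]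
      _ = 2*p*t := by rw [Real.volume_Icc, ENNReal.toReal_ofReal (by linarith)]; ring
  have hI2 : ∫ x in Set.Icc (b-t) b, g x ≤ 2*p*t := by
    calc ∫ x in Set.Icc (b-t) b, g x ≤ ∫ _x in Set.Icc (b-t) b, 2*p :=
        setIntegral_mono_on ((integrable_gaussianPDFReal 0 1).integrableOn)
          (integrableOn_const (by rw [Real.volume_Icc]; exact ENNReal.ofReal_ne_top))
          measurableSet_Icc (fun x hx => hub x (Set.Icc_subset_Icc_left hiB hx))
      _ = (volume (Set.Icc (b-t) b)).toReal * (2*p) := by rw [setIntegral_const, smul_eq_mul, measureReal_def]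
      _ = 2*p*t := by rw [Real.volume_Icc, ENNReal.toReal_ofReal (by linarith)]; ring
  set IE : ℝ := ∫ x in Set.Ico a b, g x with hIEdef
  have hIE0 : 0 ≤ IE := setIntegral_nonneg measurableSet_Ico fun x _ => gaussianPDFReal_nonneg _ _ _
  have hIElb : p/2 * (1/Lr) ≤ IE := by
    have hba' : b - a = 1/Lr := by rw [hba]; ring
    calc p/2 * (1/Lr) = (volume (Set.Ico a b)).toReal * (p/2) := by
          rw [Real.volume_Ico, hba', ENNReal.toReal_ofReal (by positivity)]; ring
      _ = ∫ _x in Set.Ico a b, p/2 := by rw [setIntegral_const, smul_eq_mul, measureReal_def]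
      _ ≤ IE :=
          setIntegral_mono_on
            (integrableOn_const (by rw [Real.volume_Ico]; exact ENNReal.ofReal_ne_top))
            ((integrable_gaussianPDFReal 0 1).integrableOn)
            measurableSet_Ico (fun x hx => hlb x (Set.Ico_subset_Icc_self hx))
  have hmapP : ∀ S : Set ℝ, MeasurableSet S → P (X ⁻¹' S) = ENNReal.ofReal (∫ x in S, g x) := by
    intro S hS
    rw [← Measure.map_apply hX hS, hmapX, gaussianReal_apply_eq_integral _ one_ne_zero]
  have hPE : P {ω | G ω ∈ Set.Ico u v} = ENNReal.ofReal IE := by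
    have hEeq : {ω | G ω ∈ Set.Ico u v} = X ⁻¹' (Set.Ico a b) := by
      ext ω
      simp only [Set.mem_setOf_eq, Set.mem_preimage, Set.mem_Ico, hG ω]
      constructor
      · rintro ⟨h1', h2'⟩
        exact ⟨by rw [ha]; linarith, by rw [hb]; linarith⟩
      · rintro ⟨h1', h2'⟩
        rw [ha] at h1'; rw [hb] at h2'
        exact ⟨by linarith, by linarith⟩
    rw [hEeq, hmapP _ measurableSet_Ico, ← hIEdef]
  have hPB3 : P (X ⁻¹' Set.Ico a b ∩ Y ⁻¹' T) ≤ ENNReal.ofReal IE * ENNReal.ofReal (1/1000) := by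
    rw [hIndep.measure_inter_preimage_eq_mul _ _ measurableSet_Ico hTmeas,
      hmapP _ measurableSet_Ico, ← hIEdef]
    refine mul_le_mul' le_rfl ?_
    rw [← Measure.map_apply hY hTmeas, hmapY, hTdef]
    exact gauss_tail_le
  have h2pt : (0:ℝ) ≤ 2*p*t := by positivity
  calc 100 * P {ω | G ω ∈ Set.Ico u v ∧ H ω ∉ Set.Ico u v}
      ≤ 100 * ((ENNReal.ofReal (2*p*t) + ENNReal.ofReal (2*p*t)) +
          ENNReal.ofReal IE * ENNReal.ofReal (1/1000)) := by
        refine mul_le_mul_right ?_ _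
        calc P {ω | G ω ∈ Set.Ico u v ∧ H ω ∉ Set.Ico u v}
            ≤ P ((X ⁻¹' Set.Icc a (a+t) ∪ X ⁻¹' Set.Icc (b-t) b) ∪
                (X ⁻¹' Set.Ico a b ∩ Y ⁻¹' T)) := measure_mono hsub
          _ ≤ P (X ⁻¹' Set.Icc a (a+t) ∪ X ⁻¹' Set.Icc (b-t) b) +
              P (X ⁻¹' Set.Ico a b ∩ Y ⁻¹' T) := measure_union_le _ _
          _ ≤ (P (X ⁻¹' Set.Icc a (a+t)) + P (X ⁻¹' Set.Icc (b-t) b)) +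
              P (X ⁻¹' Set.Ico a b ∩ Y ⁻¹' T) := add_le_add_left (measure_union_le _ _) _
          _ ≤ (ENNReal.ofReal (2*p*t) + ENNReal.ofReal (2*p*t)) +
              ENNReal.ofReal IE * ENNReal.ofReal (1/1000) := by
              refine add_le_add (add_le_add ?_ ?_) hPB3
              · rw [hmapP _ measurableSet_Icc]; exact ENNReal.ofReal_le_ofReal hI1
              · rw [hmapP _ measurableSet_Icc]; exact ENNReal.ofReal_le_ofReal hI2
    _ = ENNReal.ofReal (100 * ((2*p*t + 2*p*t) + IE * (1/1000))) := by
        rw [← ENNReal.ofReal_mul hIE0,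
          ← ENNReal.ofReal_add h2pt h2pt,
          ← ENNReal.ofReal_add (by linarith) (mul_nonneg hIE0 (by norm_num)),
          show (100:ℝ≥0∞) = ENNReal.ofReal 100 by norm_num,
          ← ENNReal.ofReal_mul (by norm_num)]
    _ ≤ ENNReal.ofReal IE := by
        refine ENNReal.ofReal_le_ofReal ?_
        have hplr : p * (1/Lr) ≤ 2 * IE := by linarith
        have hpt : p * t = (11/10^4) * (p * (1/Lr)) := by rw [htdef]; ring
        nlinarith [hplr, hpt, hIE0]
    _ = P {ω | G ω ∈ Set.Ico u v} := hPE.symm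
end
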